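/- The dual value function D is Lipschitz continuous: for all 𝔥₁, 𝔥₂ ∈ L²(ℱ_T; ℝᴺ), |D(𝔥₁) − D(𝔥₂)| ≤ E[ max_{1 ≤ n ≤ N} |𝔥₁ⁿ − 𝔥₂ⁿ| ]. In particular D is continuous on L²(ℱ_T; ℝᴺ) for the L² norm. -/

import Mathlib

open MeasureTheory

/-- The dual value function `D(𝔥) := − sup_{(X,Φ) ∈ 𝔓(𝔥)} (E[X] + Σ Φⁿ pⁿ)`, where `𝔓(𝔥)` is the
set of pairs `(X, Φ) ∈ L²(ℱ_T) × ℝᴺ` with `Hⁿ − 𝔥ⁿ ≥ X + Φⁿ` a.s. for all `1 ≤ n ≤ N`. -/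
noncomputable def Dfun {Ω : Type*} (mF : MeasurableSpace Ω) [MeasurableSpace Ω]
    (ℙ : Measure Ω) (N : ℕ) (p : ℕ → ℝ) (H 𝔥 : ℕ → Ω → ℝ) : ℝ :=
  - sSup {v : ℝ | ∃ (X : Ω → ℝ) (Φ : ℕ → ℝ),
      Measurable[mF] X ∧ MemLp X 2 ℙ ∧
      (∀ n ∈ Finset.Icc 1 N, ∀ᵐ ω ∂ℙ, X ω + Φ n ≤ H n ω - 𝔥 n ω) ∧
      v = (∫ ω, X ω ∂ℙ) + ∑ n ∈ Finset.Icc 1 N, Φ n * p n}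

/-- The feasible-value set in the definition of `Dfun`. -/
def Sset {Ω : Type*} (mF : MeasurableSpace Ω) [MeasurableSpace Ω]
    (ℙ : Measure Ω) (N : ℕ) (p : ℕ → ℝ) (H 𝔥 : ℕ → Ω → ℝ) : Set ℝ :=
  {v : ℝ | ∃ (X : Ω → ℝ) (Φ : ℕ → ℝ),
      Measurable[mF] X ∧ MemLp X 2 ℙ ∧
      (∀ n ∈ Finset.Icc 1 N, ∀ᵐ ω ∂ℙ, X ω + Φ n ≤ H n ω - 𝔥 n ω) ∧
      v = (∫ ω, X ω ∂ℙ) + ∑ n ∈ Finset.Icc 1 N, Φ n * p n}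

lemma Dfun_eq {Ω : Type*} (mF : MeasurableSpace Ω) [MeasurableSpace Ω]
    (ℙ : Measure Ω) (N : ℕ) (p : ℕ → ℝ) (H 𝔥 : ℕ → Ω → ℝ) :
    Dfun mF ℙ N p H 𝔥 = - sSup (Sset mF ℙ N p H 𝔥) := rfl


lemma meas_abs_sub {Ω : Type*} [m : MeasurableSpace Ω] {f g : Ω → ℝ}
    (hf : Measurable f) (hg : Measurable g) : Measurable (fun ω => |f ω - g ω|) :=
  (hf.sub hg).abs

lemma meas_sup'_aux {Ω : Type*} [m : MeasurableSpace Ω] {ι : Type*} {s : Finset ι}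
    (hs : s.Nonempty) {f : ι → Ω → ℝ} (hf : ∀ n ∈ s, Measurable (f n)) :
    Measurable (fun ω => s.sup' hs (fun n => f n ω)) := by
  have h1 : Measurable (s.sup' hs (fun n ω => f n ω)) :=
    Finset.sup'_induction hs _ (fun f hf g hg => hf.sup hg) hf
  convert h1 using 1
  ext ω
  simp [Finset.sup'_apply]

lemma meas_inf'_aux {Ω : Type*} [m : MeasurableSpace Ω] {ι : Type*} {s : Finset ι}
    (hs : s.Nonempty) {f : ι → Ω → ℝ} (hf : ∀ n ∈ s, Measurable (f n)) :
    Measurable (fun ω => s.inf' hs (fun n => f n ω)) := by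
  have h1 : Measurable (s.inf' hs (fun n ω => f n ω)) :=
    Finset.inf'_induction hs _ (fun f hf g hg => hf.inf hg) hf
  convert h1 using 1
  ext ω
  simp [Finset.inf'_apply]

lemma Sset_nonempty {Ω : Type*} (mF : MeasurableSpace Ω) {mΩ : MeasurableSpace Ω}
    (hmF : mF ≤ mΩ) (ℙ : Measure Ω) [IsProbabilityMeasure ℙ]
    (N : ℕ) (hN : 1 ≤ N) (p : ℕ → ℝ) {H 𝔥 : ℕ → Ω → ℝ}
    (hHmeas : ∀ n ∈ Finset.Icc 1 N, Measurable[mF] (H n))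
    (hH2 : ∀ n ∈ Finset.Icc 1 N, MemLp (H n) 2 ℙ)
    (h𝔥meas : ∀ n ∈ Finset.Icc 1 N, Measurable[mF] (𝔥 n))
    (h𝔥2 : ∀ n ∈ Finset.Icc 1 N, MemLp (𝔥 n) 2 ℙ) :
    (Sset mF ℙ N p H 𝔥).Nonempty := by
  have hne : (Finset.Icc 1 N).Nonempty := Finset.nonempty_Icc.mpr hN
  set X : Ω → ℝ := fun ω => (Finset.Icc 1 N).inf' hne (fun n => H n ω - 𝔥 n ω) with hX
  have hXm : Measurable[mF] X :=
    meas_inf'_aux (m := mF) hne (fun n hn => (hHmeas n hn).sub (h𝔥meas n hn))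
  have hXm' : Measurable[mΩ] X := hXm.mono hmF le_rfl
  have hX2 : MemLp X 2 ℙ := by
    set g : Ω → ℝ := fun ω => ∑ n ∈ Finset.Icc 1 N, |H n ω - 𝔥 n ω| with hg
    have hg2 : MemLp g 2 ℙ :=
      memLp_finset_sum _ (fun n hn => ((hH2 n hn).sub (h𝔥2 n hn)).abs)
    refine MemLp.of_le hg2 hXm'.aestronglyMeasurable ?_
    filter_upwards with ω
    obtain ⟨i, hi, hieq⟩ := Finset.exists_mem_eq_inf' hne (fun n => H n ω - 𝔥 n ω)
    simp only [X, hieq, Real.norm_eq_abs]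
    calc |H i ω - 𝔥 i ω| ≤ ∑ n ∈ Finset.Icc 1 N, |H n ω - 𝔥 n ω| :=
          Finset.single_le_sum (f := fun n => |H n ω - 𝔥 n ω|) (fun n _ => abs_nonneg _) hi
      _ ≤ |g ω| := le_abs_self _
  refine ⟨(∫ ω, X ω ∂ℙ) + ∑ n ∈ Finset.Icc 1 N, (0:ℝ) * p n, X, 0, hXm, hX2, ?_, rfl⟩
  intro n hn
  filter_upwards with ω
  simp only [Pi.zero_apply, add_zero]
  exact Finset.inf'_le _ hn

lemma Sset_bddAbove {Ω : Type*} (mF : MeasurableSpace Ω) {mΩ : MeasurableSpace Ω}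
    (hmF : mF ≤ mΩ) (ℙ : Measure Ω) [IsProbabilityMeasure ℙ]
    (N : ℕ) (p : ℕ → ℝ) {H 𝔥 : ℕ → Ω → ℝ}
    (hH2 : ∀ n ∈ Finset.Icc 1 N, MemLp (H n) 2 ℙ)
    (h𝔥2 : ∀ n ∈ Finset.Icc 1 N, MemLp (𝔥 n) 2 ℙ)
    (hp0 : ∀ n ∈ Finset.Icc 1 N, 0 < p n)
    (hp1 : ∑ n ∈ Finset.Icc 1 N, p n = 1) :
    BddAbove (Sset mF ℙ N p H 𝔥) := by
  refine ⟨∑ n ∈ Finset.Icc 1 N, p n * (∫ ω, (H n ω - 𝔥 n ω) ∂ℙ), ?_⟩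
  rintro v ⟨X, Φ, hXm, hX2, hfeas, rfl⟩
  have hXint : Integrable X ℙ := hX2.integrable one_le_two
  have key : ∀ n ∈ Finset.Icc 1 N,
      (∫ ω, X ω ∂ℙ) + Φ n ≤ ∫ ω, (H n ω - 𝔥 n ω) ∂ℙ := by
    intro n hn
    have hint : Integrable (fun ω => H n ω - 𝔥 n ω) ℙ :=
      ((hH2 n hn).sub (h𝔥2 n hn)).integrable one_le_two
    have := integral_mono_ae (hXint.add (integrable_const (Φ n))) hint (hfeas n hn)
    simpa [integral_add hXint (integrable_const (Φ n))] using this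
  calc (∫ ω, X ω ∂ℙ) + ∑ n ∈ Finset.Icc 1 N, Φ n * p n
      = ∑ n ∈ Finset.Icc 1 N, p n * ((∫ ω, X ω ∂ℙ) + Φ n) := by
        rw [Finset.sum_congr rfl (fun n _ => mul_add (p n) _ (Φ n)), Finset.sum_add_distrib,
          ← Finset.sum_mul, hp1, one_mul]
        congr 1
        exact Finset.sum_congr rfl (fun n _ => mul_comm _ _)
    _ ≤ ∑ n ∈ Finset.Icc 1 N, p n * (∫ ω, (H n ω - 𝔥 n ω) ∂ℙ) := by
        apply Finset.sum_le_sum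
        intro n hn
        exact mul_le_mul_of_nonneg_left (key n hn) (hp0 n hn).le

lemma Dfun_sub_le {Ω : Type*} (mF : MeasurableSpace Ω) {mΩ : MeasurableSpace Ω}
    (hmF : mF ≤ mΩ) (ℙ : Measure Ω) [IsProbabilityMeasure ℙ]
    (N : ℕ) (hN : 1 ≤ N) (p : ℕ → ℝ) {H : ℕ → Ω → ℝ}
    (hHmeas : ∀ n ∈ Finset.Icc 1 N, Measurable[mF] (H n))
    (hH2 : ∀ n ∈ Finset.Icc 1 N, MemLp (H n) 2 ℙ)
    {𝔞 𝔟 : ℕ → Ω → ℝ}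
    (h𝔞meas : ∀ n ∈ Finset.Icc 1 N, Measurable[mF] (𝔞 n))
    (h𝔞2 : ∀ n ∈ Finset.Icc 1 N, MemLp (𝔞 n) 2 ℙ)
    (h𝔟meas : ∀ n ∈ Finset.Icc 1 N, Measurable[mF] (𝔟 n))
    (h𝔟2 : ∀ n ∈ Finset.Icc 1 N, MemLp (𝔟 n) 2 ℙ)
    (hp0 : ∀ n ∈ Finset.Icc 1 N, 0 < p n)
    (hp1 : ∑ n ∈ Finset.Icc 1 N, p n = 1)
    {M : Ω → ℝ} (hMmeas : Measurable[mF] M) (hM2 : MemLp M 2 ℙ)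
    (hMle : ∀ n ∈ Finset.Icc 1 N, ∀ ω, 𝔞 n ω - 𝔟 n ω ≤ M ω) :
    Dfun mF ℙ N p H 𝔞 - Dfun mF ℙ N p H 𝔟 ≤ ∫ ω, M ω ∂ℙ := by
  rw [Dfun_eq, Dfun_eq]
  have hMint : Integrable M ℙ := hM2.integrable one_le_two
  have h : sSup (Sset mF ℙ N p H 𝔟) ≤ sSup (Sset mF ℙ N p H 𝔞) + ∫ ω, M ω ∂ℙ := by
    apply csSup_le (Sset_nonempty mF hmF ℙ N hN p hHmeas hH2 h𝔟meas h𝔟2)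
    rintro v ⟨X, Φ, hXm, hX2, hfeas, rfl⟩
    have hXint : Integrable X ℙ := hX2.integrable one_le_two
    have hmem : (∫ ω, X ω ∂ℙ) - (∫ ω, M ω ∂ℙ) + ∑ n ∈ Finset.Icc 1 N, Φ n * p n
        ∈ Sset mF ℙ N p H 𝔞 := by
      refine ⟨fun ω => X ω - M ω, Φ, hXm.sub hMmeas, hX2.sub hM2, ?_, by
        rw [integral_sub hXint hMint]⟩
      intro n hn
      filter_upwards [hfeas n hn] with ω hω
      have := hMle n hn ω
      linarith
    have := le_csSup (Sset_bddAbove mF hmF ℙ N p hH2 h𝔞2 hp0 hp1) hmem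
    linarith
  linarith

/-- the dual value function `D` is Lipschitz continuous:
`|D(𝔥₁) − D(𝔥₂)| ≤ E[max_{1≤n≤N} |𝔥₁ⁿ − 𝔥₂ⁿ|]` (hence continuous for the `L²` norm). -/
theorem stmt13
    {Ω : Type*} (mF : MeasurableSpace Ω) {mΩ : MeasurableSpace Ω} (hmF : mF ≤ mΩ)
    (ℙ : Measure Ω) [IsProbabilityMeasure ℙ]
    (N : ℕ) (hN : 1 ≤ N)
    (p : ℕ → ℝ) (hp0 : ∀ n ∈ Finset.Icc 1 N, 0 < p n)
    (hp1 : ∑ n ∈ Finset.Icc 1 N, p n = 1)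
    (H : ℕ → Ω → ℝ)
    (hHmeas : ∀ n ∈ Finset.Icc 1 N, Measurable[mF] (H n))
    (hH2 : ∀ n ∈ Finset.Icc 1 N, MemLp (H n) 2 ℙ)
    (𝔥₁ 𝔥₂ : ℕ → Ω → ℝ)
    (h𝔥₁meas : ∀ n ∈ Finset.Icc 1 N, Measurable[mF] (𝔥₁ n))
    (h𝔥₁2 : ∀ n ∈ Finset.Icc 1 N, MemLp (𝔥₁ n) 2 ℙ)
    (h𝔥₂meas : ∀ n ∈ Finset.Icc 1 N, Measurable[mF] (𝔥₂ n))
    (h𝔥₂2 : ∀ n ∈ Finset.Icc 1 N, MemLp (𝔥₂ n) 2 ℙ) :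
    |Dfun mF ℙ N p H 𝔥₁ - Dfun mF ℙ N p H 𝔥₂|
      ≤ ∫ ω, (Finset.Icc 1 N).sup' (Finset.nonempty_Icc.mpr hN)
          (fun n => |𝔥₁ n ω - 𝔥₂ n ω|) ∂ℙ := by
  have hne : (Finset.Icc 1 N).Nonempty := Finset.nonempty_Icc.mpr hN
  set M : Ω → ℝ := fun ω => (Finset.Icc 1 N).sup' hne (fun n => |𝔥₁ n ω - 𝔥₂ n ω|) with hM
  have hMmeas : Measurable[mF] M :=
    meas_sup'_aux (m := mF) hne (fun n hn => meas_abs_sub (m := mF) (h𝔥₁meas n hn) (h𝔥₂meas n hn))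
  have hM2 : MemLp M 2 ℙ := by
    set g : Ω → ℝ := fun ω => ∑ n ∈ Finset.Icc 1 N, |𝔥₁ n ω - 𝔥₂ n ω| with hg
    have hg2 : MemLp g 2 ℙ :=
      memLp_finset_sum _ (fun n hn => ((h𝔥₁2 n hn).sub (h𝔥₂2 n hn)).abs)
    refine MemLp.of_le hg2 ((hMmeas.mono hmF le_rfl).aestronglyMeasurable) ?_
    filter_upwards with ω
    obtain ⟨i, hi, hieq⟩ := Finset.exists_mem_eq_sup' hne (fun n => |𝔥₁ n ω - 𝔥₂ n ω|)
    simp only [M, hieq, Real.norm_eq_abs, abs_abs]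
    calc |𝔥₁ i ω - 𝔥₂ i ω| ≤ ∑ n ∈ Finset.Icc 1 N, |𝔥₁ n ω - 𝔥₂ n ω| :=
          Finset.single_le_sum (f := fun n => |𝔥₁ n ω - 𝔥₂ n ω|) (fun n _ => abs_nonneg _) hi
      _ ≤ |g ω| := le_abs_self _
  rw [abs_sub_le_iff]
  constructor
  · refine Dfun_sub_le mF hmF ℙ N hN p hHmeas hH2 h𝔥₁meas h𝔥₁2 h𝔥₂meas h𝔥₂2 hp0 hp1
      hMmeas hM2 (fun n hn ω => ?_)
    exact (le_abs_self _).trans (Finset.le_sup' (fun m => |𝔥₁ m ω - 𝔥₂ m ω|) hn)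
  · refine Dfun_sub_le mF hmF ℙ N hN p hHmeas hH2 h𝔥₂meas h𝔥₂2 h𝔥₁meas h𝔥₁2 hp0 hp1
      hMmeas hM2 (fun n hn ω => ?_)
    have : |𝔥₂ n ω - 𝔥₁ n ω| = |𝔥₁ n ω - 𝔥₂ n ω| := abs_sub_comm _ _
    exact (le_abs_self _).trans (this.le.trans (Finset.le_sup' (fun m => |𝔥₁ m ω - 𝔥₂ m ω|) hn))
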